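/- Let K ≥ 1 and N ≥ 1 be integers and suppose μ = l/K for some integer 0 ≤ l ≤ K. Then the placement vector a* with a*_l = 1/C(K,l) and all other entries zero (equal file partitioning over all user subsets of size l) is feasible and minimizes the expected delivery rate R̄ over all feasible cache placement vectors. In particular, the cache placement scheme of the MCCS at cache sizes M ∈ {0, N/K, 2N/K, …, N} is a special case of the optimal solution. -/

import Mathlib

open Finset

/-- Number of distinct requests `Ñ(d)` of a demand vector `d`. -/
def distinctReq {K N : ℕ} (d : Fin K → Fin N) : ℕ :=
  (Finset.univ.image d).card

/-- Expected delivery rate `R̄(a)` of the MCCS under placement vector `a`. -/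
noncomputable def expectedRate (K N : ℕ) (a : Fin (K + 1) → ℝ) : ℝ :=
  ((N : ℝ) ^ K)⁻¹ *
    ∑ d : Fin K → Fin N, ∑ l : Fin K,
      ((K.choose ((l : ℕ) + 1) : ℝ) - ((K - distinctReq d).choose ((l : ℕ) + 1) : ℝ)) *
        a l.castSucc

/-- Feasibility of a cache placement vector `a` for normalized cache size `μ`:
file-partition constraint, cache-size constraint, and `0 ≤ a_l ≤ 1`. -/
def Feasible (K : ℕ) (μ : ℝ) (a : Fin (K + 1) → ℝ) : Prop :=
  (∑ l : Fin (K + 1), (K.choose (l : ℕ) : ℝ) * a l) = 1 ∧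
  (∑ l : Fin K, ((K - 1).choose (l : ℕ) : ℝ) * a l.succ) ≤ μ ∧
  ∀ l, 0 ≤ a l ∧ a l ≤ 1

/-!
With `x_l = C(K,l) a_l`, feasibility makes `x` a probability vector on `{0, …, K}` with mean at
most `l₀` (because `l C(K,l) = K C(K-1,l-1)`). Telescoping `C(K,l+1) - C(K-n,l+1)` and the identity
`C(K,i) C(K-i,l) = C(K,l) C(K-l,i)` rewrite the rate of a demand with `n` distinct files as
`∑_{i<n} C(K,i+1)⁻¹ ∑_l C(K-l,i+1) x_l`. Since `m ↦ C(m,i+1)` is convex and nondecreasing on `ℕ`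
(its tangent at `m₀` has slope `C(m₀-1,i)`), Jensen's inequality bounds each inner sum below by
`C(K-l₀,i+1)`, its value at the point mass `x = δ_{l₀}`, i.e. at `a*`.
-/

theorem Nat.choose_succ_eq_choose_sub_add_sum (j : ℕ) {m n : ℕ} (hn : n ≤ m) :
    m.choose (j + 1) = (m - n).choose (j + 1) + ∑ i ∈ range n, (m - 1 - i).choose j := by
  induction n with
  | zero => simp
  | succ n ih =>
    rw [ih (by omega), sum_range_succ, ← add_assoc, show m - n = m - (n + 1) + 1 by omega,
      Nat.choose_succ_succ', show m - 1 - n = m - (n + 1) by omega]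
    ring

theorem Nat.choose_mul_choose_sub_comm (n i l : ℕ) :
    n.choose i * (n - i).choose l = n.choose l * (n - l).choose i := by
  rcases le_or_gt (i + l) n with h | h
  · have e1 := Nat.choose_mul (n := n) (k := i + l) (s := i) (by omega)
    have e2 := Nat.choose_mul (n := n) (k := i + l) (s := l) (by omega)
    rw [Nat.choose_symm_add] at e1
    simp only [Nat.add_sub_cancel_left, Nat.add_sub_cancel] at e1 e2
    rw [← e1, ← e2]
  · have hzero (a b : ℕ) (hab : n < a + b) : n.choose a * (n - a).choose b = 0 := by
      simp only [mul_eq_zero, Nat.choose_eq_zero_iff]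
      omega
    rw [hzero i l h, hzero l i (by omega)]

theorem Nat.choose_succ_add_mul_le_choose_succ (j m m₀ : ℕ) :
    (m₀.choose (j + 1) : ℝ) + ((m : ℝ) - m₀) * (m₀ - 1).choose j ≤ m.choose (j + 1) := by
  rcases le_total m₀ m with h | h
  · have htel := Nat.choose_succ_eq_choose_sub_add_sum j (Nat.sub_le m m₀)
    rw [Nat.sub_sub_self h] at htel
    have hterm : ∀ i ∈ range (m - m₀), (m₀ - 1).choose j ≤ (m - 1 - i).choose j := fun i hi =>
      Nat.choose_le_choose j (by simp only [mem_range] at hi; omega)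
    have hsum := card_nsmul_le_sum _ _ _ hterm
    rw [card_range, smul_eq_mul] at hsum
    rw [← Nat.cast_sub h]
    exact_mod_cast htel ▸ Nat.add_le_add_left hsum _
  · have htel := Nat.choose_succ_eq_choose_sub_add_sum j (Nat.sub_le m₀ m)
    rw [Nat.sub_sub_self h] at htel
    have hterm : ∀ i ∈ range (m₀ - m), (m₀ - 1 - i).choose j ≤ (m₀ - 1).choose j := fun i _ =>
      Nat.choose_le_choose j (Nat.sub_le _ _)
    have hsum := sum_le_card_nsmul _ _ _ hterm
    rw [card_range, smul_eq_mul] at hsum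
    have hle : (m₀.choose (j + 1) : ℝ) ≤
        m.choose (j + 1) + ((m₀ - m : ℕ) : ℝ) * (m₀ - 1).choose j := by
      exact_mod_cast htel ▸ Nat.add_le_add_left hsum _
    rw [Nat.cast_sub h] at hle
    linarith

theorem Nat.choose_succ_le_sum_mul_choose_succ {ι : Type*} (s : Finset ι) (w : ι → ℝ) (m : ι → ℕ)
    (m₀ j : ℕ) (hw : ∀ i ∈ s, 0 ≤ w i) (hw₁ : ∑ i ∈ s, w i = 1)
    (hmean : (m₀ : ℝ) ≤ ∑ i ∈ s, (m i : ℝ) * w i) :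
    (m₀.choose (j + 1) : ℝ) ≤ ∑ i ∈ s, ((m i).choose (j + 1) : ℝ) * w i := by
  set c : ℝ := (m₀.choose (j + 1) : ℝ)
  set c' : ℝ := ((m₀ - 1).choose j : ℝ)
  calc c ≤ c + (∑ i ∈ s, (m i : ℝ) * w i - m₀) * c' :=
        le_add_of_nonneg_right (mul_nonneg (sub_nonneg.2 hmean) (Nat.cast_nonneg _))
    _ = ∑ i ∈ s, (c + ((m i : ℝ) - m₀) * c') * w i := by
        have h (i : ι) : (c + ((m i : ℝ) - m₀) * c') * w i =
            (c - m₀ * c') * w i + c' * ((m i : ℝ) * w i) := by ring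
        simp only [h, sum_add_distrib, ← mul_sum, hw₁]
        ring
    _ ≤ ∑ i ∈ s, ((m i).choose (j + 1) : ℝ) * w i :=
        sum_le_sum fun i hi => mul_le_mul_of_nonneg_right
          (Nat.choose_succ_add_mul_le_choose_succ j (m i) m₀) (hw i hi)

noncomputable def demandRate (K n : ℕ) (a : Fin (K + 1) → ℝ) : ℝ :=
  ∑ l : Fin K, ((K.choose ((l : ℕ) + 1) : ℝ) - ((K - n).choose ((l : ℕ) + 1) : ℝ)) * a l.castSucc

theorem expectedRate_eq (K N : ℕ) (a : Fin (K + 1) → ℝ) :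
    expectedRate K N a = ((N : ℝ) ^ K)⁻¹ * ∑ d : Fin K → Fin N, demandRate K (distinctReq d) a :=
  rfl

theorem distinctReq_le {K N : ℕ} (d : Fin K → Fin N) : distinctReq d ≤ K :=
  card_image_le.trans (card_univ.trans (Fintype.card_fin K)).le

theorem demandRate_eq {K n : ℕ} (hn : n ≤ K) (a : Fin (K + 1) → ℝ) :
    demandRate K n a = ∑ i ∈ range n, ((K.choose (i + 1) : ℝ))⁻¹ *
      ∑ l : Fin (K + 1), ((K - l).choose (i + 1) : ℝ) * (K.choose l * a l) := by
  have hcoeff (l : ℕ) : (K.choose (l + 1) : ℝ) - (K - n).choose (l + 1) =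
      ∑ i ∈ range n, ((K - 1 - i).choose l : ℝ) := by
    rw [Nat.choose_succ_eq_choose_sub_add_sum l hn]
    push_cast
    ring
  simp only [demandRate, hcoeff, sum_mul]
  rw [sum_comm]
  refine sum_congr rfl fun i hi => ?_
  have hiK : i + 1 ≤ K := by simp only [mem_range] at hi; omega
  have hcross (l : ℕ) : ((K - 1 - i).choose l : ℝ) =
      ((K.choose (i + 1) : ℝ))⁻¹ * ((K - l).choose (i + 1) * K.choose l) := by
    have h := Nat.choose_mul_choose_sub_comm K (i + 1) l
    rw [show K - 1 - i = K - (i + 1) by omega]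
    rw [eq_inv_mul_iff_mul_eq₀ (by exact_mod_cast (Nat.choose_pos hiK).ne')]
    exact_mod_cast h.trans (mul_comm _ _)
  rw [Fin.sum_univ_castSucc]
  simp only [Fin.val_last, Nat.sub_self, Nat.choose_zero_succ, Nat.cast_zero, zero_mul, add_zero,
    Fin.val_castSucc, mul_sum, hcross]
  exact sum_congr rfl fun l _ => by ring

theorem sum_val_mul_choose_mul_eq (K : ℕ) (a : Fin (K + 1) → ℝ) :
    ∑ l : Fin (K + 1), (l : ℝ) * (K.choose l * a l) =
      K * ∑ l : Fin K, ((K - 1).choose l : ℝ) * a l.succ := by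
  cases K with
  | zero => simp
  | succ k =>
    rw [Fin.sum_univ_succ, mul_sum]
    simp only [Fin.val_zero, Nat.cast_zero, zero_mul, zero_add, Fin.val_succ, Nat.add_sub_cancel]
    refine sum_congr rfl fun l _ => ?_
    have h : ((l : ℝ) + 1) * (k + 1).choose (l + 1) = (k + 1) * k.choose l := by
      exact_mod_cast ((Nat.add_one_mul_choose_eq k l).trans (mul_comm _ _)).symm
    push_cast
    rw [← mul_assoc, ← mul_assoc, h]

theorem sum_val_mul_choose_mul_le {K l₀ : ℕ} (hK : 1 ≤ K) {a : Fin (K + 1) → ℝ}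
    (ha : Feasible K ((l₀ : ℝ) / K) a) :
    ∑ l : Fin (K + 1), (l : ℝ) * (K.choose l * a l) ≤ l₀ := by
  have hK' : (0 : ℝ) < K := by exact_mod_cast hK
  rw [sum_val_mul_choose_mul_eq, ← le_div_iff₀' hK']
  exact ha.2.1

noncomputable def equalPartition (K l₀ : ℕ) (l : Fin (K + 1)) : ℝ :=
  if (l : ℕ) = l₀ then 1 / (K.choose l₀ : ℝ) else 0

section EqualPartition

variable {K l₀ : ℕ}

theorem sum_mul_choose_mul_equalPartition (hl₀ : l₀ ≤ K) (g : ℕ → ℝ) :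
    ∑ l : Fin (K + 1), g l * (K.choose l * equalPartition K l₀ l) = g l₀ := by
  have hC : (K.choose l₀ : ℝ) ≠ 0 := by exact_mod_cast (Nat.choose_pos hl₀).ne'
  rw [sum_eq_single ⟨l₀, by omega⟩ (fun l _ hl => by
    rw [equalPartition, if_neg (fun h => hl (Fin.ext h)), mul_zero, mul_zero]) (by simp)]
  simp [equalPartition, hC]

theorem feasible_equalPartition (hK : 1 ≤ K) (hl₀ : l₀ ≤ K) :
    Feasible K ((l₀ : ℝ) / K) (equalPartition K l₀) := by
  refine ⟨by simpa using sum_mul_choose_mul_equalPartition hl₀ 1, ?_, fun l => ?_⟩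
  · have hK' : (K : ℝ) ≠ 0 := by exact_mod_cast (by omega : K ≠ 0)
    have h := sum_mul_choose_mul_equalPartition hl₀ fun l => (l : ℝ)
    rw [sum_val_mul_choose_mul_eq] at h
    exact le_of_eq ((eq_div_iff hK').2 ((mul_comm _ _).trans h))
  · rw [equalPartition]
    split_ifs
    · have hC : (1 : ℝ) ≤ K.choose l₀ := by exact_mod_cast Nat.choose_pos hl₀
      exact ⟨by positivity, by rw [one_div]; exact inv_le_one_of_one_le₀ hC⟩
    · exact ⟨le_rfl, zero_le_one⟩

theorem demandRate_equalPartition_le (hK : 1 ≤ K) (hl₀ : l₀ ≤ K) {a : Fin (K + 1) → ℝ}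
    (ha : Feasible K ((l₀ : ℝ) / K) a) {n : ℕ} (hn : n ≤ K) :
    demandRate K n (equalPartition K l₀) ≤ demandRate K n a := by
  rw [demandRate_eq hn, demandRate_eq hn]
  refine sum_le_sum fun i _ => mul_le_mul_of_nonneg_left ?_ (by positivity)
  rw [sum_mul_choose_mul_equalPartition hl₀ fun l => ((K - l).choose (i + 1) : ℝ)]
  have hmean : ∑ l : Fin (K + 1), ((K - l : ℕ) : ℝ) * (K.choose l * a l) =
      K - ∑ l : Fin (K + 1), (l : ℝ) * (K.choose l * a l) := by
    simp only [Nat.cast_sub (Nat.lt_succ_iff.1 (Fin.is_lt _)), sub_mul, sum_sub_distrib, ← mul_sum,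
      ha.1, mul_one]
  refine Nat.choose_succ_le_sum_mul_choose_succ univ _ (fun l : Fin (K + 1) => K - l) _ _
    (fun l _ => mul_nonneg (Nat.cast_nonneg _) (ha.2.2 l).1) ha.1 ?_
  rw [hmean, Nat.cast_sub hl₀]
  linarith [sum_val_mul_choose_mul_le hK ha]

end EqualPartition

theorem equal_partition_optimal_at_grid_points_general
    (K N : ℕ) (hK : 1 ≤ K)
    (l0 : ℕ) (hl0 : l0 ≤ K)
    (μ : ℝ) (hμ : μ = (l0 : ℝ) / K)
    (astar : Fin (K + 1) → ℝ)
    (hastar : ∀ l : Fin (K + 1),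
      astar l = if (l : ℕ) = l0 then 1 / (K.choose l0 : ℝ) else 0) :
    Feasible K μ astar ∧
      ∀ a : Fin (K + 1) → ℝ, Feasible K μ a →
        expectedRate K N astar ≤ expectedRate K N a := by
  obtain rfl : astar = equalPartition K l0 := funext hastar
  subst hμ
  refine ⟨feasible_equalPartition hK hl0, fun a ha => ?_⟩
  rw [expectedRate_eq, expectedRate_eq]
  gcongr with d
  exact demandRate_equalPartition_le hK hl0 ha (distinctReq_le d)

/-- **Case 1 (equal file partitioning).** If `μ = l/K` for an integer `0 ≤ l ≤ K`,
then the placement with `a_l = 1/C(K,l)` and all other entries zero is feasible and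
minimizes the expected delivery rate; this recovers the MCCS placement at cache
sizes `M ∈ {0, N/K, 2N/K, …, N}`. -/
theorem equal_partition_optimal_at_grid_points
    (K N : ℕ) (hK : 1 ≤ K) (hN : 1 ≤ N)
    (l0 : ℕ) (hl0 : l0 ≤ K)
    (μ : ℝ) (hμ : μ = (l0 : ℝ) / K)
    (astar : Fin (K + 1) → ℝ)
    (hastar : ∀ l : Fin (K + 1),
      astar l = if (l : ℕ) = l0 then 1 / (K.choose l0 : ℝ) else 0) :
    Feasible K μ astar ∧
      ∀ a : Fin (K + 1) → ℝ, Feasible K μ a →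
        expectedRate K N astar ≤ expectedRate K N a :=
  equal_partition_optimal_at_grid_points_general K N hK l0 hl0 μ hμ astar hastar
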